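/- arXiv:2310.19468 — 3 statements merged into one kernel-verified Lean document; each statement's English description precedes it below -/
import Mathlib

section
/- Under the AND (minimum) value function, the regret of a random matching satisfies (1/2) p(1-p) n - 1 ≤ E[μ(M*)] - E[μ(M)] ≤ (1/2) p(1-p) n, where M* is an optimal matching and M a random matching, for n even and i.i.d. Bernoulli(p) node types. -/
open Finset

lemma binom_sum_one (n : ℕ) (p : ℝ) :
    ∑ k ∈ Finset.range (n + 1), (n.choose k : ℝ) * p ^ k * (1 - p) ^ (n - k) = 1 := by
  calc ∑ k ∈ Finset.range (n + 1), (n.choose k : ℝ) * p ^ k * (1 - p) ^ (n - k)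
      = ∑ k ∈ Finset.range (n + 1), p ^ k * (1 - p) ^ (n - k) * (n.choose k : ℝ) := by
        apply Finset.sum_congr rfl; intro k _; ring
    _ = (p + (1 - p)) ^ n := (add_pow p (1 - p) n).symm
    _ = 1 := by norm_num

lemma binom_mean (n : ℕ) (p : ℝ) :
    ∑ k ∈ Finset.range (n + 1), (n.choose k : ℝ) * p ^ k * (1 - p) ^ (n - k) * k
      = n * p := by
  cases n with
  | zero => simp
  | succ m =>
    rw [Finset.sum_range_succ']
    simp only [Nat.cast_zero, mul_zero, add_zero]
    have key : ∀ k ∈ Finset.range (m + 1),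
        ((m+1).choose (k+1) : ℝ) * p ^ (k+1) * (1 - p) ^ (m + 1 - (k+1)) * ((k+1 : ℕ) : ℝ)
          = (m+1) * p * ((m.choose k : ℝ) * p ^ k * (1 - p) ^ (m - k)) := by
      intro k hk
      have h := Nat.add_one_mul_choose_eq m k
      have h' : ((m+1 : ℕ) : ℝ) * (m.choose k : ℝ) = ((m+1).choose (k+1) : ℝ) * (k+1) := by
        exact_mod_cast congrArg (Nat.cast : ℕ → ℝ) h
      push_cast at h' ⊢
      linear_combination (-(p ^ (k+1) * (1 - p) ^ (m - k))) * h'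
    rw [Finset.sum_congr rfl key, ← Finset.mul_sum, binom_sum_one m p]
    push_cast
    ring

/-- Regret of a random matching under the AND value function:
`(1/2) p(1-p) n - 1 ≤ E[⌊N₁/2⌋] - (1/2) p² n ≤ (1/2) p(1-p) n`,
where `N₁ ~ Bin(n, p)` and the expectation is written as a binomial sum. -/
theorem stmt_9 (n : ℕ) (hn : Even n) (p : ℝ) (hp0 : 0 ≤ p) (hp1 : p ≤ 1) :
    (1 / 2) * p * (1 - p) * n - 1
      ≤ (∑ k ∈ Finset.range (n + 1),
          (n.choose k : ℝ) * p ^ k * (1 - p) ^ (n - k) * ((k / 2 : ℕ) : ℝ))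
        - (1 / 2) * p ^ 2 * n ∧
    (∑ k ∈ Finset.range (n + 1),
        (n.choose k : ℝ) * p ^ k * (1 - p) ^ (n - k) * ((k / 2 : ℕ) : ℝ))
      - (1 / 2) * p ^ 2 * n
      ≤ (1 / 2) * p * (1 - p) * n := by
  have hq : 0 ≤ 1 - p := by linarith
  have hwnn : ∀ k, (0:ℝ) ≤ (n.choose k : ℝ) * p ^ k * (1 - p) ^ (n - k) := by
    intro k
    positivity
  set S := ∑ k ∈ Finset.range (n + 1),
      (n.choose k : ℝ) * p ^ k * (1 - p) ^ (n - k) * ((k / 2 : ℕ) : ℝ) with hS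
  have hupper : S ≤ (1/2) * (n * p) := by
    rw [hS]
    have := binom_mean n p
    calc ∑ k ∈ Finset.range (n + 1),
          (n.choose k : ℝ) * p ^ k * (1 - p) ^ (n - k) * ((k / 2 : ℕ) : ℝ)
        ≤ ∑ k ∈ Finset.range (n + 1),
          (n.choose k : ℝ) * p ^ k * (1 - p) ^ (n - k) * ((k : ℝ) / 2) := by
          apply Finset.sum_le_sum
          intro k _
          have h2 : ((k / 2 : ℕ) : ℝ) ≤ (k : ℝ) / 2 := by
            have := Nat.cast_div_le (m := k) (n := 2) (α := ℝ)
            simpa using this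
          exact mul_le_mul_of_nonneg_left h2 (hwnn k)
      _ = (1/2) * (n * p) := by
          rw [← this, Finset.mul_sum]
          apply Finset.sum_congr rfl
          intro k _
          ring
  have hlower : (1/2) * (n * p) - 1/2 ≤ S := by
    rw [hS]
    have hm := binom_mean n p
    have h1 := binom_sum_one n p
    calc (1/2) * (n * p) - 1/2
        = ∑ k ∈ Finset.range (n + 1),
          (n.choose k : ℝ) * p ^ k * (1 - p) ^ (n - k) * (((k : ℝ) - 1) / 2) := by
          have : ∑ k ∈ Finset.range (n + 1),
              (n.choose k : ℝ) * p ^ k * (1 - p) ^ (n - k) * (((k : ℝ) - 1) / 2)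
              = (1/2) * (∑ k ∈ Finset.range (n + 1),
                  (n.choose k : ℝ) * p ^ k * (1 - p) ^ (n - k) * k)
                - (1/2) * (∑ k ∈ Finset.range (n + 1),
                  (n.choose k : ℝ) * p ^ k * (1 - p) ^ (n - k)) := by
            rw [Finset.mul_sum, Finset.mul_sum, ← Finset.sum_sub_distrib]
            apply Finset.sum_congr rfl
            intro k _
            ring
          rw [this, hm, h1]
          ring
      _ ≤ ∑ k ∈ Finset.range (n + 1),
          (n.choose k : ℝ) * p ^ k * (1 - p) ^ (n - k) * ((k / 2 : ℕ) : ℝ) := by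
          apply Finset.sum_le_sum
          intro k _
          have h2 : ((k : ℝ) - 1) / 2 ≤ ((k / 2 : ℕ) : ℝ) := by
            have hk : k ≤ 2 * (k / 2) + 1 := by omega
            have : (k : ℝ) ≤ 2 * ((k / 2 : ℕ) : ℝ) + 1 := by exact_mod_cast hk
            linarith
          exact mul_le_mul_of_nonneg_left h2 (hwnn k)
  constructor
  · nlinarith
  · nlinarith
end

section
/- Consider the Markov chain (X_s) with X_0 = n/2 (for n even) and X_{s+1} | X_s ~ Bin(floor(X_s/2), 1-π(2^s)^2), where π(a) = pa/(1-p+pa). Then for all s ≥ 1, E[X_s] ≤ n * 2^{-s} * ∏_{i=0}^{s-1} (1 - π(2^i)^2). In particular, E[X_s] ≤ n 2^{-s}. -/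
open MeasureTheory

/-- For the Markov chain of numbers of regular matching sets, with `X 0 = n/2` and
`E[X (s+1)] = (1 - π(2^s)²) E[⌊X s / 2⌋]` where `π(a) = pa/(1-p+pa)`, one has
`E[X s] ≤ n 2⁻ˢ ∏_{i<s} (1 - π(2^i)²)`, and in particular `E[X s] ≤ n 2⁻ˢ`. -/
theorem stmt_10 {Ω : Type*} [MeasurableSpace Ω] (μ : Measure Ω) [IsProbabilityMeasure μ]
    (p : ℝ) (hp0 : 0 < p) (hp1 : p ≤ 1) (n : ℕ) (hn : Even n)
    (X : ℕ → Ω → ℕ)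
    (hint : ∀ s, Integrable (fun ω => (X s ω : ℝ)) μ)
    (h0 : ∀ ω, X 0 ω = n / 2)
    (hrec : ∀ s, ∫ ω, (X (s + 1) ω : ℝ) ∂μ
      = (1 - (p * 2 ^ s / (1 - p + p * 2 ^ s)) ^ 2) * ∫ ω, ((X s ω / 2 : ℕ) : ℝ) ∂μ)
    (s : ℕ) (hs : 1 ≤ s) :
    (∫ ω, (X s ω : ℝ) ∂μ)
      ≤ (n : ℝ) * (1 / 2) ^ s *
          ∏ i ∈ Finset.range s, (1 - (p * 2 ^ i / (1 - p + p * 2 ^ i)) ^ 2) ∧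
    (∫ ω, (X s ω : ℝ) ∂μ) ≤ (n : ℝ) * (1 / 2) ^ s := by
  have hden : ∀ i : ℕ, (0:ℝ) < 1 - p + p * 2 ^ i := by
    intro i
    have h2 : (1:ℝ) ≤ 2 ^ i := one_le_pow₀ (by norm_num)
    nlinarith
  have hc0 : ∀ i : ℕ, 0 ≤ 1 - (p * 2 ^ i / (1 - p + p * 2 ^ i)) ^ 2 := by
    intro i
    have hd := hden i
    have hπ0 : 0 ≤ p * 2 ^ i / (1 - p + p * 2 ^ i) :=
      div_nonneg (by positivity) hd.le
    have hπ1 : p * 2 ^ i / (1 - p + p * 2 ^ i) ≤ 1 := by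
      rw [div_le_one hd]; linarith
    nlinarith
  have hc1 : ∀ i : ℕ, 1 - (p * 2 ^ i / (1 - p + p * 2 ^ i)) ^ 2 ≤ 1 := by
    intro i
    have hd := hden i
    have hπ0 : 0 ≤ p * 2 ^ i / (1 - p + p * 2 ^ i) :=
      div_nonneg (by positivity) hd.le
    nlinarith
  have key : ∀ s : ℕ, ∫ ω, (X s ω : ℝ) ∂μ
      ≤ (n:ℝ) * (1/2)^s * ∏ i ∈ Finset.range s, (1 - (p * 2 ^ i / (1 - p + p * 2 ^ i)) ^ 2) := by
    intro s
    induction s with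
    | zero =>
      simp only [h0, pow_zero, Finset.range_zero, Finset.prod_empty, mul_one]
      rw [integral_const]
      simp only [measure_univ, probReal_univ, ENNReal.toReal_one, smul_eq_mul, one_mul]
      have : (n / 2 : ℕ) ≤ n := Nat.div_le_self n 2
      exact_mod_cast this
    | succ s ih =>
      rw [hrec s]
      -- integrability of floor integrand
      have hgm : AEStronglyMeasurable (fun ω => ((X s ω / 2 : ℕ) : ℝ)) μ := by
        have heq : (fun ω => ((X s ω / 2 : ℕ) : ℝ))
            = (fun x : ℝ => ((⌊x / 2⌋₊ : ℕ) : ℝ)) ∘ (fun ω => (X s ω : ℝ)) := by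
          funext ω
          simp [Function.comp]
          rw [show (2:ℝ) = ((2:ℕ):ℝ) by norm_num, Nat.floor_div_natCast, Nat.floor_natCast]
        rw [heq]
        have hm : Measurable (fun x : ℝ => ((⌊x / 2⌋₊ : ℕ) : ℝ)) :=
          measurable_from_top.comp (Nat.measurable_floor.comp (measurable_id.div_const 2))
        exact (hm.comp_aemeasurable (hint s).aemeasurable).aestronglyMeasurable
      have hgint : Integrable (fun ω => ((X s ω / 2 : ℕ) : ℝ)) μ := by
        refine (hint s).mono' hgm ?_
        filter_upwards with ω
        rw [Real.norm_eq_abs, abs_of_nonneg (by positivity)]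
        exact_mod_cast Nat.div_le_self _ _
      have hle : ∫ ω, ((X s ω / 2 : ℕ) : ℝ) ∂μ ≤ (1/2) * ∫ ω, (X s ω : ℝ) ∂μ := by
        rw [← integral_const_mul]
        refine integral_mono hgint ((hint s).const_mul _) ?_
        intro ω
        have := Nat.cast_div_le (α := ℝ) (m := X s ω) (n := 2)
        calc ((X s ω / 2 : ℕ) : ℝ) ≤ (X s ω : ℝ) / 2 := this
          _ = (1/2) * (X s ω : ℝ) := by ring
      have hnn : 0 ≤ ∫ ω, ((X s ω / 2 : ℕ) : ℝ) ∂μ :=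
        integral_nonneg fun ω => by positivity
      calc (1 - (p * 2 ^ s / (1 - p + p * 2 ^ s)) ^ 2) * ∫ ω, ((X s ω / 2 : ℕ) : ℝ) ∂μ
          ≤ (1 - (p * 2 ^ s / (1 - p + p * 2 ^ s)) ^ 2) * ((1/2) * ∫ ω, (X s ω : ℝ) ∂μ) :=
            mul_le_mul_of_nonneg_left hle (hc0 s)
        _ ≤ (1 - (p * 2 ^ s / (1 - p + p * 2 ^ s)) ^ 2)
              * ((1/2) * ((n:ℝ) * (1/2)^s
                  * ∏ i ∈ Finset.range s, (1 - (p * 2 ^ i / (1 - p + p * 2 ^ i)) ^ 2))) := by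
            apply mul_le_mul_of_nonneg_left _ (hc0 s)
            linarith
        _ = (n:ℝ) * (1/2)^(s+1)
              * ∏ i ∈ Finset.range (s+1), (1 - (p * 2 ^ i / (1 - p + p * 2 ^ i)) ^ 2) := by
            rw [Finset.prod_range_succ]; ring
  refine ⟨key s, ?_⟩
  calc ∫ ω, (X s ω : ℝ) ∂μ
      ≤ (n:ℝ) * (1/2)^s * ∏ i ∈ Finset.range s, (1 - (p * 2 ^ i / (1 - p + p * 2 ^ i)) ^ 2) :=
        key s
    _ ≤ (n:ℝ) * (1/2)^s * 1 := by
        apply mul_le_mul_of_nonneg_left _ (by positivity)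
        exact Finset.prod_le_one (fun i _ => hc0 i) (fun i _ => hc1 i)
    _ = (n:ℝ) * (1/2)^s := mul_one _
end

section
/- Let p_s = p·2^s/(1-p+p·2^s). If p ≤ c/n for a constant c > 0, then ∑_{s=1}^{log_2(n)} p_s ≤ log_2(1 + 2np) ≤ log_2(1 + 2c). -/
lemma aux_rpow_le (t : ℝ) (ht0 : 0 ≤ t) (ht1 : t ≤ 1) : (2:ℝ) ^ t ≤ 1 + t := by
  have h := convexOn_exp.2 (Set.mem_univ (Real.log 2)) (Set.mem_univ 0) ht0
    (by linarith : (0:ℝ) ≤ 1 - t) (by ring)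
  simp only [smul_eq_mul, mul_zero, add_zero, Real.exp_zero, Real.exp_log two_pos] at h
  rw [Real.rpow_def_of_pos two_pos]
  calc Real.exp (Real.log 2 * t) = Real.exp (t * Real.log 2) := by ring_nf
    _ ≤ t * 2 + (1 - t) * 1 := h
    _ = 1 + t := by ring

lemma aux_le_logb (t : ℝ) (ht0 : 0 ≤ t) (ht1 : t ≤ 1) : t ≤ Real.logb 2 (1 + t) := by
  calc t = Real.logb 2 ((2:ℝ) ^ t) := (Real.logb_rpow two_pos (by norm_num)).symm
    _ ≤ Real.logb 2 (1 + t) := Real.logb_le_logb_of_le one_lt_two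
        (Real.rpow_pos_of_pos two_pos t) (aux_rpow_le t ht0 ht1)

/-- If `p ≤ c/n` (i.e. `np ≤ c`) with `n = 2^m`, then
`∑_{s=1}^{log₂ n} p_s ≤ log₂(1 + 2np) ≤ log₂(1 + 2c)`,
where `p_s = p 2^s/(1-p+p 2^s)`. -/
theorem stmt_14 (p : ℝ) (hp0 : 0 < p) (hp1 : p ≤ 1) (m n : ℕ) (hm : 1 ≤ m)
    (hn : n = 2 ^ m) (c : ℝ) (hc : 0 < c) (hnp : (n : ℝ) * p ≤ c) :
    (∑ s ∈ Finset.Icc 1 m, p * 2 ^ s / (1 - p + p * 2 ^ s))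
      ≤ Real.logb 2 (1 + 2 * n * p) ∧
    Real.logb 2 (1 + 2 * n * p) ≤ Real.logb 2 (1 + 2 * c) := by
  have hnp' : 0 < 1 + 2 * (n:ℝ) * p := by
    have : (0:ℝ) ≤ (n:ℝ) * p := by positivity
    linarith
  constructor
  · set f : ℕ → ℝ := fun s => 1 - p + p * 2 ^ s with hf
    have hfpos : ∀ s, 0 < f s := by
      intro s
      have h2 : (0:ℝ) < p * 2 ^ s := by positivity
      simp only [hf]; linarith
    set g : ℕ → ℝ := fun s => Real.logb 2 (f s) with hg
    have key : ∀ s : ℕ, p * 2 ^ s / (1 - p + p * 2 ^ s) ≤ g (s + 1) - g s := by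
      intro s
      set t : ℝ := p * 2 ^ s / f s with htdef
      have hfs := hfpos s
      have ht0 : 0 ≤ t := by positivity
      have ht1 : t ≤ 1 := by
        rw [htdef, div_le_one hfs]
        simp only [hf]; linarith [pow_pos (by norm_num : (0:ℝ) < 2) s]
      have hstep : f (s + 1) = f s * (1 + t) := by
        rw [htdef]
        field_simp
        simp only [hf, pow_succ]
        ring
      have : g (s + 1) = g s + Real.logb 2 (1 + t) := by
        rw [hg]
        simp only [hstep]
        rw [Real.logb_mul (ne_of_gt hfs) (by linarith : (1:ℝ) + t ≠ 0)]
      rw [this]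
      have := aux_le_logb t ht0 ht1
      simp only [htdef, hf] at this ⊢
      linarith
    have hsum : (∑ s ∈ Finset.Icc 1 m, p * 2 ^ s / (1 - p + p * 2 ^ s))
        ≤ g (m + 1) - g 1 := by
      have h1 : (∑ s ∈ Finset.Icc 1 m, p * 2 ^ s / (1 - p + p * 2 ^ s))
          ≤ ∑ s ∈ Finset.Icc 1 m, (g (s + 1) - g s) :=
        Finset.sum_le_sum fun s _ => key s
      have h2 : ∑ s ∈ Finset.Icc 1 m, (g (s + 1) - g s) = g (m + 1) - g 1 := by
        rw [← Finset.Ico_add_one_right_eq_Icc, Finset.sum_Ico_eq_sum_range, Nat.add_sub_cancel]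
        have h := Finset.sum_range_sub (fun i => g (1 + i)) m
        simp only [Nat.add_comm 1] at h ⊢
        convert h using 1
      rw [h2] at h1; exact h1
    have hg1 : 0 ≤ g 1 := by
      rw [hg]
      apply Real.logb_nonneg one_lt_two
      simp only [hf, pow_one]; linarith
    have hgm : g (m + 1) ≤ Real.logb 2 (1 + 2 * n * p) := by
      rw [hg]
      apply Real.logb_le_logb_of_le one_lt_two (hfpos _)
      simp only [hf, hn, pow_succ]
      push_cast
      ring_nf
      nlinarith [pow_pos (by norm_num : (0:ℝ) < 2) m]
    linarith
  · apply Real.logb_le_logb_of_le one_lt_two hnp'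
    linarith
end
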